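/- Let f and g be complex-valued Schwartz functions on ℝ. Then in L²(ℝ) one has the identity C₊(f·g) + (C₊f)·(C₊g) − C₊(f·C₊g) − C₊(g·C₊f) = 0, and consequently C₊((C₊f)·(C₊g)) = (C₊f)·(C₊g). -/

import Mathlib

/-!
Write `φ = 𝓕 f`, `ψ = 𝓕 g` (Mathlib's normalisation of the Fourier transform) and `𝟙₊` for
the indicator of `(0, ∞)`. After rescaling, `C₊ F = 𝓕⁻ (𝟙₊ · 𝓕 F)`, and multiplying an integrable
function by `𝓕⁻ b` convolves its Fourier transform with `b`. So the four terms of the first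
identity are `𝓕⁻` of `𝟙₊ (φ ⋆ ψ)`, `𝟙₊φ ⋆ 𝟙₊ψ`, `𝟙₊ (φ ⋆ 𝟙₊ψ)` and `𝟙₊ (𝟙₊φ ⋆ ψ)`, and their
signed sum integrates `φ v ψ w` against
`𝟙(v + w > 0) + 𝟙(v > 0) 𝟙(w > 0) - 𝟙(v + w > 0) 𝟙(w > 0) - 𝟙(v + w > 0) 𝟙(v > 0)`,
which vanishes identically.

For the second identity, `C₊f · C₊g = 𝓕⁻ H` with `H = 𝟙₊φ ⋆ 𝟙₊ψ` continuous and supported in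
`(0, ∞)`. Integration by parts shows that `C₊f` and `C₊g` decay like `1 / |x|`, so their product
is integrable; Fourier inversion then gives `𝓕 (C₊f · C₊g) = H`, which `𝟙₊` leaves unchanged.
-/

open MeasureTheory Complex Filter
open scoped Real ComplexConjugate

noncomputable section

/-- The Fourier transform with the convention `f̂ ξ = ∫ e^{-i x ξ} f x dx`. -/
def FT (f : ℝ → ℂ) (ξ : ℝ) : ℂ :=
  ∫ x : ℝ, Complex.exp (-(Complex.I * x * ξ)) * f x

/-- The Cauchy–Szegő projection `C₊`, given (for functions whose Fourier transform is
integrable, as is the case for all functions appearing in the statement below) by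
`(C₊ f)(x) = (1/2π) ∫₀^∞ e^{ixξ} f̂(ξ) dξ`, i.e. `(C₊ f)^ = χ_{[0,∞)} f̂`. -/
def CP (f : ℝ → ℂ) (x : ℝ) : ℂ :=
  ((2 * π : ℝ) : ℂ)⁻¹ * ∫ ξ in Set.Ioi (0 : ℝ), Complex.exp (Complex.I * x * ξ) * FT f ξ

open scoped FourierTransform Convolution
open Set ContinuousLinearMap Topology

section FourierTransform

variable {V : Type*} [NormedAddCommGroup V] [InnerProductSpace ℝ V] [FiniteDimensional ℝ V]
  [MeasurableSpace V] [BorelSpace V]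

theorem MeasureTheory.Integrable.fourierInv_add {a b : V → ℂ} (ha : Integrable a)
    (hb : Integrable b) : 𝓕⁻ (a + b) = 𝓕⁻ a + 𝓕⁻ b :=
  VectorFourier.fourierIntegral_add Real.continuous_fourierChar (continuous_inner (𝕜 := ℝ)).neg
    ha hb

theorem MeasureTheory.Integrable.fourierInv_sub {a b : V → ℂ} (ha : Integrable a)
    (hb : Integrable b) : 𝓕⁻ (a - b) = 𝓕⁻ a - 𝓕⁻ b := by
  rw [eq_sub_iff_add_eq, ← (ha.sub hb).fourierInv_add hb, sub_add_cancel]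

theorem MeasureTheory.Integrable.continuous_fourierInv {h : V → ℂ} (hh : Integrable h) :
    Continuous (𝓕⁻ h) :=
  VectorFourier.fourierIntegral_continuous Real.continuous_fourierChar
    (continuous_inner (𝕜 := ℝ)).neg hh

theorem norm_fourierInv_indicator_le (s : Set V) {h : V → ℂ} (hh : Integrable h) (x : V) :
    ‖𝓕⁻ (s.indicator h) x‖ ≤ ∫ t, ‖h t‖ :=
  (VectorFourier.norm_fourierIntegral_le_integral_norm _ _ _ _ _).trans <|
    integral_mono_of_nonneg (Eventually.of_forall fun _ => norm_nonneg _) hh.norm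
      (Eventually.of_forall fun _ => norm_indicator_le_norm_self _ _)

theorem fourierInv_convolution_mul {a b : V → ℂ} (ha : Integrable a) (hb : Integrable b) (x : V) :
    𝓕⁻ (a ⋆[mul ℂ ℂ] b) x = 𝓕⁻ a x * 𝓕⁻ b x := by
  simp only [Real.fourierInv_eq_fourier_neg]
  exact Real.fourier_mul_convolution_eq ha hb (-x)

/-- Self-adjointness of `𝓕⁻` moves it from `b` onto the modulated function `e^{-2πi⟪·,ξ⟫} F`,
whose inverse transform at `t` is `𝓕 F (ξ - t)`. -/
theorem fourier_mul_fourierInv {F b : V → ℂ} (hF : Integrable F) (hb : Integrable b) :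
    𝓕 (fun x => F x * 𝓕⁻ b x) = 𝓕 F ⋆[mul ℂ ℂ] b := by
  ext ξ
  have hFξ : Integrable (fun x => 𝐞 (-inner ℝ x ξ) • F x) :=
    (Real.fourierIntegral_convergent_iff ξ).2 hF
  have key := VectorFourier.integral_fourierIntegral_smul_eq_flip (L := -innerₗ V)
    (μ := volume) (ν := volume) Real.continuous_fourierChar (continuous_inner (𝕜 := ℝ)).neg hFξ hb
  simp only [VectorFourier.fourierIntegral, LinearMap.flip_apply, LinearMap.neg_apply,
    innerₗ_apply_apply, neg_neg] at key
  calc 𝓕 (fun x => F x * 𝓕⁻ b x) ξ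
      = ∫ x, (𝐞 (-inner ℝ x ξ) • F x) • ∫ v, 𝐞 (inner ℝ x v) • b v := by
        simp_rw [Real.fourier_eq, Real.fourierInv_eq, real_inner_comm, Circle.smul_def,
          smul_eq_mul, mul_assoc]
    _ = ∫ t, (∫ v, 𝐞 (inner ℝ v t) • 𝐞 (-inner ℝ v ξ) • F v) • b t := key.symm
    _ = (𝓕 F ⋆[mul ℂ ℂ] b) ξ := by
        simp only [convolution_mul_swap, Real.fourier_eq, smul_eq_mul, smul_smul,
          ← AddChar.map_add_eq_mul, inner_sub_right]
        simp only [sub_eq_add_neg, neg_add_rev, neg_neg]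

end FourierTransform

theorem fourierInv_indicator_Ioi (h : ℝ → ℂ) (x : ℝ) :
    𝓕⁻ ((Ioi 0).indicator h) x = ∫ t in Ioi 0, (𝐞 (x * t) : ℂ) * h t := by
  rw [Real.fourierInv_eq, ← integral_indicator measurableSet_Ioi]
  congr 1 with t
  by_cases ht : t ∈ Ioi 0 <;> simp [ht, Circle.smul_def]

theorem fourierInv_indicator_Ioi_deriv {φ φ' : ℝ → ℂ} (hd : ∀ t, HasDerivAt φ (φ' t) t)
    (hφ : Integrable φ) (hφ' : Integrable φ') (x : ℝ) :
    2 * π * I * x * 𝓕⁻ ((Ioi 0).indicator φ) x = -φ 0 - 𝓕⁻ ((Ioi 0).indicator φ') x := by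
  set e : ℝ → ℂ := fun t => 𝐞 (x * t)
  have he : ∀ t, HasDerivAt e (2 * π * I * x * e t) t := fun t => by
    refine ((Real.hasDerivAt_fourierChar (x * t)).scomp t
      ((hasDerivAt_id' t).const_mul x)).congr_deriv ?_
    simp only [e, mul_one, Complex.real_smul]
    ring
  have he_cont : Continuous e := continuous_iff_continuousAt.2 fun t => (he t).continuousAt
  have he_meas : AEStronglyMeasurable e := he_cont.aestronglyMeasurable
  have he_norm : ∀ᵐ t, ‖e t‖ ≤ 1 := Eventually.of_forall fun t => (Circle.norm_coe _).le
  have hφ_cont : Continuous φ := continuous_iff_continuousAt.2 fun t => (hd t).continuousAt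
  have hint' : IntegrableOn (e * φ') (Ioi 0) := (hφ'.bdd_mul he_meas he_norm).integrableOn
  have hint : IntegrableOn ((fun t => 2 * π * I * x * e t) * φ) (Ioi 0) :=
    ((hφ.bdd_mul he_meas he_norm).const_mul (2 * π * I * x)).integrableOn.congr_fun
      (fun t _ => by simp only [Pi.mul_apply]; ring) measurableSet_Ioi
  have hzero : Tendsto (e * φ) (𝓝[>] 0) (𝓝 (φ 0)) := by
    simpa [e] using ((he_cont.mul hφ_cont).tendsto 0).mono_left nhdsWithin_le_nhds
  have hinfty : Tendsto (e * φ) atTop (𝓝 0) :=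
    squeeze_zero_norm (fun t => by simp [e, Circle.norm_coe])
      (tendsto_zero_iff_norm_tendsto_zero.1 <| tendsto_zero_of_hasDerivAt_of_integrableOn_Ioi
        (a := 0) (fun t _ => hd t) hφ'.integrableOn hφ.integrableOn)
  have hibp := integral_Ioi_mul_deriv_eq_deriv_mul (fun t _ => he t) (fun t _ => hd t)
    hint' hint hzero hinfty
  simp only [mul_assoc, integral_const_mul] at hibp
  rw [fourierInv_indicator_Ioi, fourierInv_indicator_Ioi, hibp]
  ring

theorem one_add_abs_mul_norm_fourierInv_indicator_Ioi_le {φ φ' : ℝ → ℂ}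
    (hd : ∀ t, HasDerivAt φ (φ' t) t) (hφ : Integrable φ) (hφ' : Integrable φ') (x : ℝ) :
    (1 + |x|) * ‖𝓕⁻ ((Ioi 0).indicator φ) x‖
      ≤ (∫ t, ‖φ t‖) + (‖φ 0‖ + ∫ t, ‖φ' t‖) / (2 * π) := by
  have hdecay : |x| * ‖𝓕⁻ ((Ioi 0).indicator φ) x‖ ≤ (‖φ 0‖ + ∫ t, ‖φ' t‖) / (2 * π) := by
    rw [le_div_iff₀ Real.two_pi_pos]
    calc |x| * ‖𝓕⁻ ((Ioi 0).indicator φ) x‖ * (2 * π)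
        = ‖2 * π * I * x * 𝓕⁻ ((Ioi 0).indicator φ) x‖ := by
          simp [abs_of_pos Real.pi_pos]
          ring
      _ = ‖-φ 0 - 𝓕⁻ ((Ioi 0).indicator φ') x‖ := by
          rw [fourierInv_indicator_Ioi_deriv hd hφ hφ' x]
      _ ≤ ‖φ 0‖ + ‖𝓕⁻ ((Ioi 0).indicator φ') x‖ := by
          simpa only [norm_neg] using norm_sub_le (-φ 0) _
      _ ≤ ‖φ 0‖ + ∫ t, ‖φ' t‖ := by
          gcongr
          exact norm_fourierInv_indicator_le _ hφ' x
  rw [add_mul, one_mul]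
  exact add_le_add (norm_fourierInv_indicator_le _ hφ x) hdecay

theorem integrable_mul_of_one_add_abs_mul_le {F G : ℝ → ℂ} (hF : AEStronglyMeasurable F)
    (hG : AEStronglyMeasurable G) {C D : ℝ} (hFC : ∀ x, (1 + |x|) * ‖F x‖ ≤ C)
    (hGD : ∀ x, (1 + |x|) * ‖G x‖ ≤ D) : Integrable (fun x => F x * G x) := by
  have hC : 0 ≤ C := (by positivity : (0:ℝ) ≤ (1 + |0|) * ‖F 0‖).trans (hFC 0)
  refine (integrable_inv_one_add_sq.const_mul (C * D)).mono' (hF.mul hG)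
    (Eventually.of_forall fun x => ?_)
  have hx : 1 + x ^ 2 ≤ (1 + |x|) ^ 2 := by nlinarith [abs_nonneg x, sq_abs x]
  rw [norm_mul, ← div_eq_mul_inv, le_div_iff₀ (by positivity)]
  calc ‖F x‖ * ‖G x‖ * (1 + x ^ 2) ≤ ((1 + |x|) * ‖F x‖) * ((1 + |x|) * ‖G x‖) := by
        nlinarith [mul_nonneg (norm_nonneg (F x)) (norm_nonneg (G x))]
    _ ≤ C * D := mul_le_mul (hFC x) (hGD x) (by positivity) hC

theorem continuous_posConvolution {E E' F : Type*} [NormedAddCommGroup E] [NormedSpace ℝ E]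
    [NormedAddCommGroup E'] [NormedSpace ℝ E'] [NormedAddCommGroup F] [NormedSpace ℝ F]
    {f : ℝ → E} {g : ℝ → E'} (hf : Continuous f) (hg : Continuous g) (L : E →L[ℝ] E' →L[ℝ] F) :
    Continuous (posConvolution f g L) := by
  classical
  have hint : Continuous fun x => ∫ t in 0..x, L (f t) (g (x - t)) :=
    intervalIntegral.continuous_parametric_intervalIntegral_of_continuous
      (by fun_prop) continuous_id
  rw [posConvolution, ← piecewise_eq_indicator]
  refine hint.piecewise (fun x hx => ?_) continuous_const
  rw [frontier_Ioi, mem_singleton_iff] at hx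
  simp [hx]

/-- For `u > 0` the combination is `((a - 𝟙₊a) ⋆ (b - 𝟙₊b)) u`, and for `u ≤ 0` it is
`(𝟙₊a ⋆ 𝟙₊b) u`; both vanish because the factors live on half-lines that cannot add up to `u`. -/
theorem indicator_Ioi_convolution_combination_ae_eq_zero {a b : ℝ → ℂ} (ha : Integrable a)
    (hb : Integrable b) :
    (Ioi 0).indicator (a ⋆[mul ℂ ℂ] b) + (Ioi 0).indicator a ⋆[mul ℂ ℂ] (Ioi 0).indicator b
        - (Ioi 0).indicator (a ⋆[mul ℂ ℂ] (Ioi 0).indicator b)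
        - (Ioi 0).indicator ((Ioi 0).indicator a ⋆[mul ℂ ℂ] b) =ᵐ[volume] 0 := by
  have ha' := ha.indicator (measurableSet_Ioi (a := 0))
  have hb' := hb.indicator (measurableSet_Ioi (a := 0))
  filter_upwards [ha.ae_convolution_exists (mul ℂ ℂ) hb,
    ha'.ae_convolution_exists (mul ℂ ℂ) hb', ha.ae_convolution_exists (mul ℂ ℂ) hb',
    ha'.ae_convolution_exists (mul ℂ ℂ) hb] with u h₁ h₂ h₃ h₄
  simp only [Pi.add_apply, Pi.sub_apply, Pi.zero_apply]
  by_cases hu : 0 < u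
  · simp only [indicator_of_mem (mem_Ioi.2 hu), convolution_def]
    rw [← integral_add h₁ h₂, ← integral_sub (h₁.fun_add h₂) h₃,
      ← integral_sub ((h₁.fun_add h₂).sub' h₃) h₄]
    refine integral_eq_zero_of_ae (Eventually.of_forall fun t => ?_)
    by_cases ht : 0 < t
    · simp [indicator_of_mem (mem_Ioi.2 ht)]
    · have hut : 0 < u - t := by linarith
      simp [indicator_of_mem (mem_Ioi.2 hut)]
  · simp only [indicator_of_notMem (notMem_Ioi.2 (not_lt.1 hu)), convolution_def]
    rw [zero_add, sub_zero, sub_zero]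
    refine integral_eq_zero_of_ae (Eventually.of_forall fun t => ?_)
    by_cases ht : 0 < t
    · have hut : ¬ 0 < u - t := by linarith
      simp [indicator_of_notMem (notMem_Ioi.2 (not_lt.1 hut))]
    · simp [indicator_of_notMem (notMem_Ioi.2 (not_lt.1 ht))]

theorem FT_eq_fourier (F : ℝ → ℂ) (ξ : ℝ) : FT F ξ = 𝓕 F (ξ / (2 * π)) := by
  rw [FT, Real.fourier_real_eq_integral_exp_smul]
  congr 1 with x
  rw [smul_eq_mul]
  congr 2
  field_simp
  push_cast
  ring

theorem CP_eq_fourierInv (F : ℝ → ℂ) : CP F = 𝓕⁻ ((Ioi 0).indicator (𝓕 F)) := by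
  ext x
  have hscale := integral_comp_mul_left_Ioi
    (fun ξ => Complex.exp (I * x * ξ) * 𝓕 F (ξ / (2 * π))) 0 Real.two_pi_pos
  rw [mul_zero] at hscale
  calc CP F x = (2 * π)⁻¹ • ∫ ξ : ℝ in Ioi 0, Complex.exp (I * x * ξ) * 𝓕 F (ξ / (2 * π)) := by
        simp_rw [CP, FT_eq_fourier, Complex.real_smul, Complex.ofReal_inv]
    _ = ∫ u in Ioi 0, (𝐞 (x * u) : ℂ) * 𝓕 F u := by
        rw [← hscale]
        refine setIntegral_congr_fun measurableSet_Ioi fun u _ => ?_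
        rw [Real.fourierChar_apply, mul_div_cancel_left₀ _ Real.two_pi_pos.ne']
        congr 2
        push_cast
        ring
    _ = 𝓕⁻ ((Ioi 0).indicator (𝓕 F)) x := (fourierInv_indicator_Ioi _ x).symm

theorem CP_mul_fourierInv {F b : ℝ → ℂ} (hF : Integrable F) (hb : Integrable b) :
    CP (fun x => F x * 𝓕⁻ b x) = 𝓕⁻ ((Ioi 0).indicator (𝓕 F ⋆[mul ℂ ℂ] b)) := by
  rw [CP_eq_fourierInv, fourier_mul_fourierInv hF hb]

theorem CP_fourierInv_of_support_subset {H : ℝ → ℂ} (hc : Continuous H) (hi : Integrable H)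
    (hi' : Integrable (𝓕⁻ H)) (hsupp : Function.support H ⊆ Ioi 0) : CP (𝓕⁻ H) = 𝓕⁻ H := by
  have hFH : Integrable (𝓕 H) := by
    simpa [Real.fourierInv_eq_fourier_neg] using hi'.comp_neg
  rw [CP_eq_fourierInv, hc.fourier_fourierInv_eq hi hFH, indicator_eq_self.2 hsupp]

namespace SchwartzMap

variable (f g : 𝓢(ℝ, ℂ))

theorem coe_eq_fourierInv_fourier : ⇑f = 𝓕⁻ (𝓕 ⇑f) := by
  rw [← fourier_coe, ← fourierInv_coe, FourierPair.fourierInv_fourier_eq]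

theorem integrable_indicator_Ioi_fourier : Integrable ((Ioi 0).indicator (𝓕 ⇑f)) :=
  (𝓕 f).integrable.indicator measurableSet_Ioi

theorem exists_one_add_abs_mul_norm_fourierInv_indicator_Ioi_le :
    ∃ C, ∀ x, (1 + |x|) * ‖𝓕⁻ ((Ioi 0).indicator f) x‖ ≤ C :=
  ⟨_, one_add_abs_mul_norm_fourierInv_indicator_Ioi_le
    (fun t => by rw [derivCLM_apply]; exact f.hasDerivAt t) f.integrable
    (derivCLM ℝ ℂ f).integrable⟩

theorem integrable_CP_mul_CP : Integrable (fun x => CP f x * CP g x) := by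
  obtain ⟨C, hC⟩ := exists_one_add_abs_mul_norm_fourierInv_indicator_Ioi_le (𝓕 f)
  obtain ⟨D, hD⟩ := exists_one_add_abs_mul_norm_fourierInv_indicator_Ioi_le (𝓕 g)
  rw [CP_eq_fourierInv, CP_eq_fourierInv]
  exact integrable_mul_of_one_add_abs_mul_le
    f.integrable_indicator_Ioi_fourier.continuous_fourierInv.aestronglyMeasurable
    g.integrable_indicator_Ioi_fourier.continuous_fourierInv.aestronglyMeasurable
    hC hD

theorem CP_product_identity (x : ℝ) :
    CP (fun y => f y * g y) x + CP f x * CP g x - CP (fun y => f y * CP g y) x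
      - CP (fun y => g y * CP f y) x = 0 := by
  have hφ : Integrable (𝓕 ⇑f) := (𝓕 f).integrable
  have hψ : Integrable (𝓕 ⇑g) := (𝓕 g).integrable
  have hPφ := f.integrable_indicator_Ioi_fourier
  have hPψ := g.integrable_indicator_Ioi_fourier
  have h₁ : CP (fun y => f y * g y) = 𝓕⁻ ((Ioi 0).indicator (𝓕 ⇑f ⋆[mul ℂ ℂ] 𝓕 ⇑g)) := by
    rw [← CP_mul_fourierInv f.integrable hψ, ← coe_eq_fourierInv_fourier g]
  have h₂ : CP f x * CP g x
      = 𝓕⁻ ((Ioi 0).indicator (𝓕 ⇑f) ⋆[mul ℂ ℂ] (Ioi 0).indicator (𝓕 ⇑g)) x := by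
    rw [CP_eq_fourierInv, CP_eq_fourierInv, fourierInv_convolution_mul hPφ hPψ]
  have h₃ : CP (fun y => f y * CP g y)
      = 𝓕⁻ ((Ioi 0).indicator (𝓕 ⇑f ⋆[mul ℂ ℂ] (Ioi 0).indicator (𝓕 ⇑g))) := by
    rw [← CP_mul_fourierInv f.integrable hPψ, ← CP_eq_fourierInv]
  have h₄ : CP (fun y => g y * CP f y)
      = 𝓕⁻ ((Ioi 0).indicator ((Ioi 0).indicator (𝓕 ⇑f) ⋆[mul ℂ ℂ] 𝓕 ⇑g)) := by
    rw [← MeasureTheory.convolution_flip, flip_mul, ← CP_mul_fourierInv g.integrable hPφ,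
      ← CP_eq_fourierInv]
  have hT₁ := (hφ.integrable_convolution (mul ℂ ℂ) hψ).indicator (measurableSet_Ioi (a := 0))
  have hT₂ := hPφ.integrable_convolution (mul ℂ ℂ) hPψ
  have hT₃ := (hφ.integrable_convolution (mul ℂ ℂ) hPψ).indicator (measurableSet_Ioi (a := 0))
  have hT₄ := (hPφ.integrable_convolution (mul ℂ ℂ) hψ).indicator (measurableSet_Ioi (a := 0))
  rw [h₁, h₂, h₃, h₄]
  rw [← Pi.add_apply, ← hT₁.fourierInv_add hT₂, ← Pi.sub_apply, ← (hT₁.add hT₂).fourierInv_sub hT₃,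
    ← Pi.sub_apply, ← ((hT₁.add hT₂).sub hT₃).fourierInv_sub hT₄]
  rw [Real.fourierInv_congr_ae (indicator_Ioi_convolution_combination_ae_eq_zero hφ hψ)]
  simp [Real.fourierInv_eq]

theorem CP_CP_mul_CP : CP (fun y => CP f y * CP g y) = fun y => CP f y * CP g y := by
  have hPφ := f.integrable_indicator_Ioi_fourier
  have hPψ := g.integrable_indicator_Ioi_fourier
  have hH : (fun y => CP f y * CP g y)
      = 𝓕⁻ ((Ioi 0).indicator (𝓕 ⇑f) ⋆[mul ℂ ℂ] (Ioi 0).indicator (𝓕 ⇑g)) := by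
    ext y
    rw [CP_eq_fourierInv, CP_eq_fourierInv, fourierInv_convolution_mul hPφ hPψ]
  have hpos : (Ioi 0).indicator (𝓕 ⇑f) ⋆[mul ℂ ℂ] (Ioi 0).indicator (𝓕 ⇑g)
      = posConvolution (𝓕 ⇑f) (𝓕 ⇑g) (mul ℝ ℂ) := by
    rw [posConvolution_eq_convolution_indicator (ν := volume)]
    rfl
  rw [hH]
  refine CP_fourierInv_of_support_subset ?_ (hPφ.integrable_convolution _ hPψ)
    (hH ▸ integrable_CP_mul_CP f g) ?_ <;> rw [hpos]
  · exact continuous_posConvolution (𝓕 f).continuous (𝓕 g).continuous _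
  · exact support_indicator_subset

end SchwartzMap

/-- For Schwartz functions `f`, `g` one has, as an identity in `L²(ℝ)` (i.e. a.e.),
`C₊(fg) + (C₊f)(C₊g) - C₊(f · C₊g) - C₊(g · C₊f) = 0`, and consequently
`C₊((C₊f)(C₊g)) = (C₊f)(C₊g)`. -/
theorem cauchy_projection_identity (f g : SchwartzMap ℝ ℂ) :
    (fun x => CP (fun y => f y * g y) x + CP (⇑f) x * CP (⇑g) x
        - CP (fun y => f y * CP (⇑g) y) x - CP (fun y => g y * CP (⇑f) y) x)
      =ᵐ[volume] (0 : ℝ → ℂ) ∧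
    CP (fun y => CP (⇑f) y * CP (⇑g) y) =ᵐ[volume] (fun y => CP (⇑f) y * CP (⇑g) y) :=
  ⟨.of_forall (f.CP_product_identity g), .of_forall (congrFun (f.CP_CP_mul_CP g))⟩

end
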